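/- arXiv:1910.02218 — 4 statements merged into one kernel-verified Lean document; each statement's English description precedes it below -/
import Mathlib

section
/- For all real x > 1, (1 + 1/√x)^x > e^(√x − 1/2). -/
open Real

lemma aux_log_lower (t : ℝ) (ht : 0 < t) : t - t ^ 2 / 2 < Real.log (1 + t) := by
  have key : StrictMonoOn (fun s : ℝ => Real.log (1 + s) - s + s ^ 2 / 2) (Set.Ici 0) := by
    apply strictMonoOn_of_deriv_pos (convex_Ici 0)
    · apply ContinuousOn.add
      · apply ContinuousOn.sub
        · apply ContinuousOn.log (by fun_prop)
          intro s hs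
          simp only [Set.mem_Ici] at hs
          linarith
        · fun_prop
      · fun_prop
    · intro s hs
      rw [interior_Ici, Set.mem_Ioi] at hs
      have h1 : (0:ℝ) < 1 + s := by linarith
      have hd : HasDerivAt (fun s : ℝ => Real.log (1 + s) - s + s ^ 2 / 2)
          (1 / (1 + s) - 1 + s) s := by
        have hlog : HasDerivAt (fun s : ℝ => Real.log (1 + s)) (1 / (1 + s)) s := by
          have := (Real.hasDerivAt_log (ne_of_gt h1)).comp s
            ((hasDerivAt_id s).const_add 1)
          simpa [one_div, Function.comp_def] using this
        have := (hlog.sub (hasDerivAt_id s)).add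
          ((((hasDerivAt_id s).pow 2)).div_const 2)
        refine this.congr_deriv ?_
        simp only [id_eq]
        ring
      rw [hd.deriv]
      rw [div_sub_one (ne_of_gt h1)]
      have : (1 - (1 + s)) / (1 + s) + s = s ^ 2 / (1 + s) := by
        field_simp; ring
      rw [this]
      positivity
  have h0 := key (Set.self_mem_Ici) (Set.mem_Ici.mpr ht.le) ht
  simp only [add_zero, Real.log_one] at h0
  linarith

/-- For all real `x > 1`, `(1 + 1/√x)^x > exp (√x − 1/2)`. -/
theorem stmt2 (x : ℝ) (hx : 1 < x) :
    (1 + 1 / Real.sqrt x) ^ x > Real.exp (Real.sqrt x - 1 / 2) := by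
  have hx0 : (0:ℝ) < x := by linarith
  have hs : 0 < Real.sqrt x := Real.sqrt_pos.mpr hx0
  set t := 1 / Real.sqrt x with htdef
  have ht : 0 < t := by positivity
  have h1t : (0:ℝ) < 1 + t := by linarith
  have hsq : Real.sqrt x * Real.sqrt x = x := Real.mul_self_sqrt hx0.le
  rw [Real.rpow_def_of_pos h1t]
  apply Real.exp_lt_exp.mpr
  have hlog := aux_log_lower t ht
  have hxt : x * t = Real.sqrt x := by
    rw [htdef]; field_simp; rw [Real.sq_sqrt hx0.le]
  have hxt2 : x * t ^ 2 = 1 := by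
    rw [htdef]; field_simp; rw [Real.sq_sqrt hx0.le]
  have h := mul_lt_mul_of_pos_left hlog hx0
  nlinarith [h, hxt, hxt2]
end

section
/- The Markov chain on positive integers with transition rates q(k, k+1) = (1−β) and q(k, 1) = k(1−β) for k ≥ 2 (the number of blocks at the tip of a tree under the 1-distance-greedy protocol) has stationary distribution π_1 = 1/(2(e−2)) and π_n = 2π_1/(n+1)! for n ≥ 2, and the stationary mean is E[W] = Σ n·π_n = 1/(e−2). -/
open Real

lemma expSum : HasSum (fun n : ℕ => (1:ℝ)/ (Nat.factorial n)) (Real.exp 1) := by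
  have := NormedSpace.expSeries_div_hasSum_exp (1 : ℝ)
  simpa [Real.exp_eq_exp_ℝ] using this

lemma expSum2 : HasSum (fun n : ℕ => (1:ℝ)/ (Nat.factorial (n+2))) (Real.exp 1 - 2) := by
  refine (hasSum_nat_add_iff (f := fun n : ℕ => (1:ℝ)/ (Nat.factorial n)) 2).mpr ?_
  have : Real.exp 1 - 2 + ∑ i ∈ Finset.range 2, (1:ℝ)/ (Nat.factorial i) = Real.exp 1 := by
    simp [Finset.sum_range_succ]; norm_num
  rw [this]; exact expSum

lemma expSum3 : HasSum (fun n : ℕ => (1:ℝ)/ (Nat.factorial (n+3))) (Real.exp 1 - 5/2) := by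
  refine (hasSum_nat_add_iff (f := fun n : ℕ => (1:ℝ)/ (Nat.factorial n)) 3).mpr ?_
  have : Real.exp 1 - 5/2 + ∑ i ∈ Finset.range 3, (1:ℝ)/ (Nat.factorial i) = Real.exp 1 := by
    simp [Finset.sum_range_succ]; norm_num
  rw [this]; exact expSum

lemma telSum : HasSum (fun n : ℕ => ((n:ℝ)+2)/ (Nat.factorial (n+3))) (1/2) := by
  have h := expSum2.sub expSum3
  have heq : (fun n : ℕ => (1:ℝ)/ (Nat.factorial (n+2)) - 1/ (Nat.factorial (n+3)))
      = fun n : ℕ => ((n:ℝ)+2)/ (Nat.factorial (n+3)) := by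
    funext n
    have hf : (Nat.factorial (n+3) : ℝ) = ((n:ℝ)+3) * (Nat.factorial (n+2)) := by
      rw [show n+3 = (n+2)+1 from rfl, Nat.factorial_succ]; push_cast; ring
    have h2 : (Nat.factorial (n+2) : ℝ) ≠ 0 := by positivity
    rw [hf]; field_simp; ring
  rw [heq] at h
  convert h using 1
  · rfl
  norm_num


/-- The stationary distribution `p₁ = 1/(2(e−2))`, `p_n = 2p₁/(n+1)!` for `n ≥ 2`
of the 1-distance-greedy tip chain: it sums to one, satisfies the balance
equations `p A = 0` for the generator `A` (with rates scaled by `1−β`), and has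
mean `1/(e−2)`. -/
theorem stmt4 (β : ℝ) (hβ : 0 ≤ β) (hβ1 : β < 1) (p : ℕ → ℝ)
    (h1 : p 1 = 1 / (2 * (Real.exp 1 - 2)))
    (hn : ∀ n : ℕ, 2 ≤ n → p n = 2 * p 1 / (Nat.factorial (n + 1))) :
    -- (a) p is a probability distribution on {1, 2, 3, ...}
    (∑' n : ℕ, p (n + 1)) = 1 ∧
    -- (b) balance equations p A = 0:
    -- column 1: −p₁ + Σ_{k≥2} k·p_k = 0
    ((1 - β) * (-(p 1) + ∑' k : ℕ, ((k + 2 : ℕ) : ℝ) * p (k + 2)) = 0) ∧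
    -- column j+1 for j ≥ 1: p_j − (j+2)·p_{j+1} = 0
    (∀ j : ℕ, 1 ≤ j → (1 - β) * (p j - ((j + 2 : ℕ) : ℝ) * p (j + 1)) = 0) ∧
    -- (c) the stationary mean is 1/(e−2)
    (∑' n : ℕ, ((n + 1 : ℕ) : ℝ) * p (n + 1)) = 1 / (Real.exp 1 - 2) := by
  have he2 : (2:ℝ) < Real.exp 1 := by
    have := Real.exp_one_gt_d9; linarith
  have hne : Real.exp 1 - 2 ≠ 0 := by linarith
  have hp2 : ∀ n : ℕ, p (n + 2) = 2 * p 1 / (Nat.factorial (n + 3)) := by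
    intro n
    have := hn (n + 2) (by omega)
    simpa [show n + 2 + 1 = n + 3 from rfl] using this
  -- HasSum for the tail of p
  have hTail : HasSum (fun n : ℕ => p (n + 2)) (2 * p 1 * (Real.exp 1 - 5/2)) := by
    have := expSum3.mul_left (2 * p 1)
    convert this using 2 with n
    · rfl
    rw [hp2 n]; ring
  -- (a)
  have hA : HasSum (fun n : ℕ => p (n + 1)) 1 := by
    have h := (hasSum_nat_add_iff (f := fun n : ℕ => p (n + 1)) 1).mp hTail
    have hv : 2 * p 1 * (Real.exp 1 - 5/2) + ∑ i ∈ Finset.range 1, p (i + 1) = 1 := by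
      rw [Finset.sum_range_one, h1]; field_simp; ring
    rwa [hv] at h
  -- weighted tail sum: Σ (k+2) p(k+2) = p 1
  have hW : HasSum (fun k : ℕ => ((k + 2 : ℕ) : ℝ) * p (k + 2)) (p 1) := by
    have := telSum.mul_left (2 * p 1)
    have hv : 2 * p 1 * (1/2) = p 1 := by ring
    rw [hv] at this
    convert this using 2 with k
    · rfl
    rw [hp2 k]; push_cast; ring
  refine ⟨hA.tsum_eq, ?_, ?_, ?_⟩
  · rw [hW.tsum_eq]; ring
  · intro j hj
    rcases Nat.lt_or_ge j 2 with hj2 | hj2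
    · interval_cases j
      have h2 := hn 2 le_rfl
      have h6 : ((Nat.factorial (2+1)):ℝ) = 6 := by norm_num [Nat.factorial]
      rw [h2, h6]; push_cast; ring
    · have ha := hn j hj2
      have hb := hn (j + 1) (by omega)
      have hf : (Nat.factorial (j + 1 + 1) : ℝ) = ((j:ℝ)+2) * (Nat.factorial (j + 1)) := by
        rw [Nat.factorial_succ]; push_cast; ring
      have hfn : (Nat.factorial (j + 1) : ℝ) ≠ 0 := by positivity
      rw [ha, hb, hf]
      push_cast
      field_simp
      ring
  · -- mean
    have hM : HasSum (fun n : ℕ => ((n + 1 : ℕ) : ℝ) * p (n + 1)) (1 / (Real.exp 1 - 2)) := by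
      have h := (hasSum_nat_add_iff (f := fun n : ℕ => ((n + 1 : ℕ) : ℝ) * p (n + 1)) 1).mp
        (by convert hW using 2)
      have hv : p 1 + ∑ i ∈ Finset.range 1, ((i + 1 : ℕ) : ℝ) * p (i + 1)
          = 1 / (Real.exp 1 - 2) := by
        rw [Finset.sum_range_one, h1]; push_cast; field_simp; norm_num
      rwa [hv] at h
    exact hM.tsum_eq
end

section
/- The sequence π on integers n ≥ 2 defined by π_2 = 2/(3e²−19) and π_n = 3π_2·2^{n+1}/(n+2)! for n ≥ 3 sums to 1, and its mean satisfies Σ_{n≥2} n·π_n = 4π_2 = 8/(3e²−19). -/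
set_option maxHeartbeats 1000000

open Real

private lemma exp2_tsum : Real.exp 2 = ∑' n : ℕ, (2:ℝ)^n / n.factorial := by
  rw [Real.exp_eq_exp_ℝ, NormedSpace.exp_eq_tsum_div]

private lemma sumf : Summable (fun n : ℕ => (2:ℝ)^n / n.factorial) :=
  Real.summable_pow_div_factorial 2

private lemma tail5 : ∑' n : ℕ, (2:ℝ)^(n+5) / (n+5).factorial = Real.exp 2 - 7 := by
  have h := Summable.sum_add_tsum_nat_add (f := fun n : ℕ => (2:ℝ)^n / n.factorial) 5 sumf
  rw [← exp2_tsum] at h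
  have : (∑ i ∈ Finset.range 5, (2:ℝ)^i / i.factorial) = 7 := by
    simp [Finset.sum_range_succ, Nat.factorial]; norm_num
  rw [this] at h
  linarith

private lemma sumg : Summable (fun n : ℕ => (2:ℝ)^(n+4) / (n+4).factorial) :=
  (summable_nat_add_iff 4).mpr sumf

private lemma tele : ∑' n : ℕ, ((2:ℝ)^(n+4) / (n+4).factorial - (2:ℝ)^(n+5) / (n+5).factorial) = 2/3 := by
  have hg' : Summable (fun n : ℕ => (2:ℝ)^(n+1+4) / (n+1+4).factorial) :=
    (summable_nat_add_iff 1).mpr sumg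
  have h := Summable.sum_add_tsum_nat_add (f := fun n : ℕ => (2:ℝ)^(n+4) / (n+4).factorial) 1 sumg
  have h2 : ∑' n : ℕ, ((2:ℝ)^(n+4) / (n+4).factorial - (2:ℝ)^(n+5) / (n+5).factorial)
      = (∑' n : ℕ, (2:ℝ)^(n+4) / (n+4).factorial) - ∑' n : ℕ, (2:ℝ)^(n+1+4) / (n+1+4).factorial := by
    rw [← Summable.tsum_sub sumg hg']
    
  rw [h2]
  have h3 : (∑ i ∈ Finset.range 1, (2:ℝ)^(i+4) / (i+4).factorial) = 2/3 := by
    simp [Nat.factorial]; norm_num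
  rw [h3] at h
  linarith

/-- The sequence `p₂ = 2/(3e²−19)`, `p_n = 3 p₂ 2^(n+1)/(n+2)!` for `n ≥ 3`
sums to 1, and its mean is `Σ_{n≥2} n p_n = 4 p₂ = 8/(3e²−19)`. -/
theorem stmt5 (p : ℕ → ℝ)
    (h2 : p 2 = 2 / (3 * (Real.exp 1) ^ 2 - 19))
    (hn : ∀ n : ℕ, 3 ≤ n → p n = 3 * p 2 * 2 ^ (n + 1) / (Nat.factorial (n + 2))) :
    (∑' n : ℕ, p (n + 2)) = 1 ∧
    (∑' n : ℕ, ((n + 2 : ℕ) : ℝ) * p (n + 2)) = 4 * p 2 ∧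
    4 * p 2 = 8 / (3 * (Real.exp 1) ^ 2 - 19) := by
  have he2 : (Real.exp 1) ^ 2 = Real.exp 2 := by
    rw [← Real.exp_nat_mul]; norm_num
  have hegt : Real.exp 1 > 2.7 := by
    have := Real.exp_one_gt_d9; linarith
  have hD : 3 * (Real.exp 1) ^ 2 - 19 > 0 := by nlinarith
  have hD' : 3 * (Real.exp 1) ^ 2 - 19 ≠ 0 := ne_of_gt hD
  have hfac : ∀ n : ℕ, ((n).factorial : ℝ) ≠ 0 :=
    fun n => Nat.cast_ne_zero.mpr (Nat.factorial_ne_zero _)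
  have hp3 : ∀ n : ℕ, p (n + 3) = 3 * p 2 * 2 ^ (n + 4) / ((n + 5).factorial) := by
    intro n
    have := hn (n + 3) (by omega)
    convert this using 3 <;> omega
  have hp3' : ∀ n : ℕ, p (n + 3) = (3 * p 2 / 2) * ((2:ℝ) ^ (n + 5) / (n + 5).factorial) := by
    intro n
    rw [hp3 n]
    have := hfac (n + 5)
    field_simp
    ring
  have sumf5 : Summable (fun n : ℕ => (2:ℝ)^(n+5) / (n+5).factorial) :=
    (summable_nat_add_iff 5).mpr sumf
  have hS3 : Summable (fun n : ℕ => p (n + 3)) :=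
    (sumf5.mul_left (3 * p 2 / 2)).congr (fun n => (hp3' n).symm)
  have hT3 : (∑' n : ℕ, p (n + 3)) = (3 * p 2 / 2) * (Real.exp 2 - 7) := by
    calc (∑' n : ℕ, p (n + 3))
        = ∑' n : ℕ, (3 * p 2 / 2) * ((2:ℝ) ^ (n + 5) / (n + 5).factorial) :=
          tsum_congr hp3'
      _ = (3 * p 2 / 2) * ∑' n : ℕ, (2:ℝ) ^ (n + 5) / (n + 5).factorial := tsum_mul_left
      _ = (3 * p 2 / 2) * (Real.exp 2 - 7) := by rw [tail5]
  -- Goal 1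
  have hS2 : Summable (fun n : ℕ => p (n + 2)) := by
    apply (summable_nat_add_iff 1).mp
    exact hS3.congr (fun n => congrArg p (by omega))
  have goal1 : (∑' n : ℕ, p (n + 2)) = 1 := by
    rw [Summable.tsum_eq_zero_add hS2]
    have : (∑' n : ℕ, p (n + 1 + 2)) = ∑' n : ℕ, p (n + 3) :=
      tsum_congr (fun n => congrArg p (by omega))
    rw [this, hT3, ← he2]
    have hkey : p 2 * (3 * (Real.exp 1) ^ 2 - 19) = 2 := by
      rw [h2]; exact div_mul_cancel₀ 2 hD'
    nlinarith [hkey]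
  -- Goal 2 : telescoping
  have htel : ∀ n : ℕ, ((n + 3 : ℕ) : ℝ) * p (n + 3)
      = (3 * p 2) * ((2:ℝ)^(n+4) / (n+4).factorial - (2:ℝ)^(n+5) / (n+5).factorial) := by
    intro n
    rw [hp3 n]
    have hf5 : ((n+5).factorial : ℝ) = ((n:ℝ)+5) * ((n+4).factorial) := by
      rw [show n+5 = (n+4)+1 from rfl, Nat.factorial_succ]
      push_cast; ring
    have h4 := hfac (n+4)
    have h5 := hfac (n+5)
    rw [hf5] at h5 ⊢
    have hn5 : ((n:ℝ)+5) ≠ 0 := by positivity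
    field_simp
    push_cast
    ring
  have sumtel : Summable (fun n : ℕ =>
      (2:ℝ)^(n+4) / (n+4).factorial - (2:ℝ)^(n+5) / (n+5).factorial) :=
    sumg.sub ((summable_nat_add_iff 1).mpr sumg)
  have hS3' : Summable (fun n : ℕ => ((n + 3 : ℕ) : ℝ) * p (n + 3)) :=
    (sumtel.mul_left (3 * p 2)).congr (fun n => (htel n).symm)
  have hT3' : (∑' n : ℕ, ((n + 3 : ℕ) : ℝ) * p (n + 3)) = 2 * p 2 := by
    calc (∑' n : ℕ, ((n + 3 : ℕ) : ℝ) * p (n + 3))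
        = ∑' n : ℕ, (3 * p 2) * ((2:ℝ)^(n+4) / (n+4).factorial - (2:ℝ)^(n+5) / (n+5).factorial) :=
          tsum_congr htel
      _ = (3 * p 2) * ∑' n : ℕ, ((2:ℝ)^(n+4) / (n+4).factorial - (2:ℝ)^(n+5) / (n+5).factorial) :=
          tsum_mul_left
      _ = 2 * p 2 := by rw [tele]; ring
  have hS2' : Summable (fun n : ℕ => ((n + 2 : ℕ) : ℝ) * p (n + 2)) := by
    apply (summable_nat_add_iff 1).mp
    exact hS3'.congr (fun n => by
      show ((n + 3 : ℕ) : ℝ) * p (n + 3) = ((n + 1 + 2 : ℕ) : ℝ) * p (n + 1 + 2)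
      congr 2 <;> omega)
  have goal2 : (∑' n : ℕ, ((n + 2 : ℕ) : ℝ) * p (n + 2)) = 4 * p 2 := by
    rw [Summable.tsum_eq_zero_add hS2']
    have : (∑' n : ℕ, ((n + 1 + 2 : ℕ) : ℝ) * p (n + 1 + 2))
        = ∑' n : ℕ, ((n + 3 : ℕ) : ℝ) * p (n + 3) :=
      tsum_congr (fun n => by congr 2 <;> omega)
    rw [this, hT3']
    norm_num
    ring
  refine ⟨goal1, goal2, ?_⟩
  rw [h2]; ring
end

section
/- For the function F_c(φ,ψ) := −1/φ + 1 + ψ + (1+ψ)·ln(1/(φ(1+ψ))) + (1/c)·ln(1+cψ) + ψ·ln(1+1/(cψ)), with ψ = ψ(φ) given by ψ = (c − cφ + √((c−cφ)² + 4cφ))/(2cφ), the map φ ↦ F_c(φ, ψ(φ)) is strictly decreasing on φ > 0; hence the equation F_c(φ, ψ(φ)) = 0 has at most one positive solution φ_c. -/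
open Real


/-- the simplified function `g` is strictly monotone on `(0,∞)` for `a ≥ 1`. -/
lemma stmt19_g_mono (a : ℝ) (ha : 1 ≤ a) :
    StrictMonoOn (fun x : ℝ => (1 + x) / (1 + a * x) + Real.log (a * x)
      + (1 / a - 1) * Real.log (1 + a * x)) (Set.Ioi 0) := by
  have ha0 : (0:ℝ) < a := lt_of_lt_of_le one_pos ha
  have hder : ∀ x : ℝ, 0 < x →
      HasDerivAt (fun x : ℝ => (1 + x) / (1 + a * x) + Real.log (a * x)
        + (1 / a - 1) * Real.log (1 + a * x))
      ((1 * (1 + a * x) - (1 + x) * a) / (1 + a * x) ^ 2 + a / (a * x)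
        + (1 / a - 1) * (a / (1 + a * x))) x := by
    intro x hx
    have hax : 0 < a * x := mul_pos ha0 hx
    have h1ax : 0 < 1 + a * x := by linarith
    have d1 : HasDerivAt (fun x : ℝ => (1 + x) / (1 + a * x))
        ((1 * (1 + a * x) - (1 + x) * a) / (1 + a * x) ^ 2) x :=
      by simpa using (((hasDerivAt_id x).const_add 1).fun_div
        (((hasDerivAt_id x).const_mul a).const_add 1) (ne_of_gt h1ax))
    have d2 : HasDerivAt (fun x : ℝ => Real.log (a * x)) (a / (a * x)) x :=
      by simpa using (((hasDerivAt_id x).const_mul a).log (ne_of_gt hax))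
    have d3 : HasDerivAt (fun x : ℝ => (1 / a - 1) * Real.log (1 + a * x))
        ((1 / a - 1) * (a / (1 + a * x))) x :=
      by simpa using (((((hasDerivAt_id x).const_mul a).const_add 1).log (ne_of_gt h1ax)).const_mul (1/a-1))
    simpa [mul_comm] using (d1.fun_add d2).fun_add d3
  apply StrictMonoOn.mono ?_ (le_refl (Set.Ioi (0:ℝ)))
  apply strictMonoOn_of_deriv_pos (convex_Ioi 0)
  · exact fun x hx => ((hder x hx).differentiableAt.continuousAt).continuousWithinAt
  · intro x hx
    rw [interior_Ioi] at hx
    have hx : (0:ℝ) < x := hx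
    rw [(hder x hx).deriv]
    have hax : 0 < a * x := mul_pos ha0 hx
    have h1ax : 0 < 1 + a * x := by linarith
    have key : (1 * (1 + a * x) - (1 + x) * a) / (1 + a * x) ^ 2 + a / (a * x)
        + (1 / a - 1) * (a / (1 + a * x))
        = (1 + 2 * x + a * x ^ 2) / (x * (1 + a * x) ^ 2) := by
      field_simp
      ring
    rw [key]
    positivity

/-- Let `ψ(φ)` be the positive root of `cφψ² + (cφ − c)ψ − 1 = 0`, i.e.
`ψ(φ) = (c − cφ + √((c−cφ)² + 4cφ))/(2cφ)`, and let
`F(φ) = −1/φ + 1 + ψ + (1+ψ) log(1/(φ(1+ψ))) + (1/c) log(1+cψ) + ψ log(1+1/(cψ))`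
with `ψ = ψ(φ)`. Then `F` is strictly decreasing on `(0,∞)`; hence `F(φ) = 0`
has at most one positive solution. -/
theorem stmt19 (c : ℕ) (hc : 1 ≤ c)
    (ψ : ℝ → ℝ)
    (hψ : ∀ φ : ℝ, 0 < φ →
      ψ φ = ((c : ℝ) - c * φ + Real.sqrt (((c : ℝ) - c * φ) ^ 2 + 4 * c * φ))
              / (2 * c * φ))
    (F : ℝ → ℝ)
    (hF : ∀ φ : ℝ, 0 < φ →
      F φ = -1 / φ + 1 + ψ φ
        + (1 + ψ φ) * Real.log (1 / (φ * (1 + ψ φ)))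
        + (1 / (c : ℝ)) * Real.log (1 + c * ψ φ)
        + ψ φ * Real.log (1 + 1 / (c * ψ φ))) :
    StrictAntiOn F (Set.Ioi (0 : ℝ)) ∧
    ∀ φ₁ ∈ Set.Ioi (0 : ℝ), ∀ φ₂ ∈ Set.Ioi (0 : ℝ),
      F φ₁ = 0 → F φ₂ = 0 → φ₁ = φ₂ := by
  set a : ℝ := (c : ℝ) with ha_def
  have ha : (1:ℝ) ≤ a := by rw [ha_def]; exact_mod_cast hc
  have ha0 : (0:ℝ) < a := lt_of_lt_of_le one_pos ha
  -- positivity of ψ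
  have hψpos : ∀ φ : ℝ, 0 < φ → 0 < ψ φ := by
    intro φ hφ
    rw [hψ φ hφ]
    apply div_pos
    · have h1 : Real.sqrt ((a - a * φ) ^ 2) < Real.sqrt ((a - a * φ) ^ 2 + 4 * a * φ) :=
        Real.sqrt_lt_sqrt (sq_nonneg _) (by nlinarith)
      rw [Real.sqrt_sq_eq_abs] at h1
      have h2 : -(a - a * φ) ≤ |a - a * φ| := neg_le_abs _
      linarith
    · positivity
  -- quadratic relation
  have hrel : ∀ φ : ℝ, 0 < φ → a * φ * ψ φ * (1 + ψ φ) = 1 + a * ψ φ := by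
    intro φ hφ
    rw [hψ φ hφ]
    set s := Real.sqrt ((a - a * φ) ^ 2 + 4 * a * φ) with hs_def
    have hs : s ^ 2 = (a - a * φ) ^ 2 + 4 * a * φ :=
      Real.sq_sqrt (by nlinarith [sq_nonneg (a - a * φ)])
    have h2 : (2 * a * φ) ≠ 0 := by positivity
    field_simp
    nlinarith [hs, sq_nonneg s]
  -- ψ strictly decreasing
  have hψanti : ∀ φ₁ φ₂ : ℝ, 0 < φ₁ → φ₁ < φ₂ → ψ φ₂ < ψ φ₁ := by
    intro φ₁ φ₂ h1 h12
    by_contra h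
    push_neg at h
    have h2 : 0 < φ₂ := lt_trans h1 h12
    have p1 := hψpos φ₁ h1
    have p2 := hψpos φ₂ h2
    have r1 := hrel φ₁ h1
    have r2 := hrel φ₂ h2
    set q1 := ψ φ₁
    set q2 := ψ φ₂
    have h' : 0 ≤ q2 - q1 := sub_nonneg.2 h
    have key : (1 + a * q2) * (a * q1 * (1 + q1)) ≤ (1 + a * q1) * (a * q2 * (1 + q2)) := by
      nlinarith [mul_nonneg h' (mul_pos p1 p2).le,
        mul_nonneg h' (by linarith : (0:ℝ) ≤ q1 + q2),
        mul_nonneg (mul_nonneg h' (mul_pos p1 p2).le) ha0.le]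
    have hK1 : 0 < a * q1 * (1 + q1) := by positivity
    have hK2 : 0 < a * q2 * (1 + q2) := by positivity
    have hfin : φ₂ * ((a * q2 * (1 + q2)) * (a * q1 * (1 + q1)))
        ≤ φ₁ * ((a * q1 * (1 + q1)) * (a * q2 * (1 + q2))) := by
      calc φ₂ * ((a * q2 * (1 + q2)) * (a * q1 * (1 + q1)))
          = (1 + a * q2) * (a * q1 * (1 + q1)) := by rw [← r2]; ring
        _ ≤ (1 + a * q1) * (a * q2 * (1 + q2)) := key
        _ = φ₁ * ((a * q1 * (1 + q1)) * (a * q2 * (1 + q2))) := by rw [← r1]; ring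
    rw [mul_comm (a * q1 * (1 + q1))] at hfin
    have := le_of_mul_le_mul_right hfin (mul_pos hK2 hK1)
    linarith
  -- F = g ∘ ψ
  have hFg : ∀ φ : ℝ, 0 < φ → F φ = (1 + ψ φ) / (1 + a * ψ φ) + Real.log (a * ψ φ)
      + (1 / a - 1) * Real.log (1 + a * ψ φ) := by
    intro φ hφ
    have hp := hψpos φ hφ
    have hr := hrel φ hφ
    set p := ψ φ with hp_def
    have hap : 0 < a * p := mul_pos ha0 hp
    have h1p : 0 < 1 + p := by linarith
    have h1ap : 0 < 1 + a * p := by linarith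
    have hφp : φ * (1 + p) = (1 + a * p) / (a * p) := by
      rw [eq_div_iff (ne_of_gt hap)]; nlinarith [hr]
    have L1 : Real.log (1 / (φ * (1 + p))) = Real.log (a * p) - Real.log (1 + a * p) := by
      rw [hφp, one_div, Real.log_inv, Real.log_div (ne_of_gt h1ap) (ne_of_gt hap)]; ring
    have L2 : Real.log (1 + 1 / (a * p)) = Real.log (1 + a * p) - Real.log (a * p) := by
      have : 1 + 1 / (a * p) = (1 + a * p) / (a * p) := by field_simp; ring
      rw [this, Real.log_div (ne_of_gt h1ap) (ne_of_gt hap)]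
    have hφinv : -1 / φ = -(a * p * (1 + p)) / (1 + a * p) := by
      rw [div_eq_div_iff (ne_of_gt hφ) (ne_of_gt h1ap)]
      nlinarith [hr]
    rw [hF φ hφ, ← hp_def, L1, L2, hφinv]
    have hne : (1 + a * p) ≠ 0 := ne_of_gt h1ap
    field_simp
    ring
  refine ⟨?_, ?_⟩
  · intro φ₁ hm1 φ₂ hm2 h12
    have h1 : (0:ℝ) < φ₁ := hm1
    have h2 : (0:ℝ) < φ₂ := hm2
    rw [hFg φ₁ h1, hFg φ₂ h2]
    exact stmt19_g_mono a ha (Set.mem_Ioi.2 (hψpos φ₂ h2)) (Set.mem_Ioi.2 (hψpos φ₁ h1))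
      (hψanti φ₁ φ₂ h1 h12)
  · intro φ₁ hm1 φ₂ hm2 e1 e2
    by_contra hne
    rcases lt_or_gt_of_ne hne with hlt | hgt
    · have h1 : (0:ℝ) < φ₁ := hm1
      have := stmt19_g_mono a ha (Set.mem_Ioi.2 (hψpos φ₂ (lt_trans h1 hlt)))
        (Set.mem_Ioi.2 (hψpos φ₁ h1)) (hψanti φ₁ φ₂ h1 hlt)
      simp only at this
      rw [← hFg φ₂ (lt_trans h1 hlt), ← hFg φ₁ h1, e1, e2] at this
      exact lt_irrefl 0 this
    · have h2 : (0:ℝ) < φ₂ := hm2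
      have := stmt19_g_mono a ha (Set.mem_Ioi.2 (hψpos φ₁ (lt_trans h2 hgt)))
        (Set.mem_Ioi.2 (hψpos φ₂ h2)) (hψanti φ₂ φ₁ h2 hgt)
      simp only at this
      rw [← hFg φ₁ (lt_trans h2 hgt), ← hFg φ₂ h2, e1, e2] at this
      exact lt_irrefl 0 this
end
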